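/- Let H be a complex Hilbert space and let P₁ and P₂ be two (in general unbounded) symmetric operators on H, i.e. densely defined partial linear maps such that ⟪Pᵢ x, y⟫ = ⟪x, Pᵢ y⟫ for all x, y in the domain of Pᵢ. Assume that the domains of P₁ and P₂ are equal, that L is a linear subspace of the domain of P₁ which is dense in H, that P₁ and P₂ agree on L, and that the restrictions P₁|_L and P₂|_L are essentially self-adjoint (i.e. their closures are self-adjoint). Then P₁ = P₂. -/

import Mathlib

/-!
The adjoint of an operator only sees the closure of its graph, so the adjoint of `R = P₁|_L`
equals that of its closure `A`, and since `A` is self-adjoint, `R† = A`. A symmetric extension `P`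
of `R` satisfies `P ≤ R†`, hence `P ≤ A`. The two restrictions coincide, so `P₁` and `P₂` are both
restrictions of the same `A` to the same domain.
-/

open scoped ComplexInnerProductSpace

namespace LinearPMap

section Closure

variable {R E F : Type*} [CommRing R] [AddCommGroup E] [AddCommGroup F] [Module R E] [Module R F]
  [TopologicalSpace E] [TopologicalSpace F] [ContinuousAdd E] [ContinuousAdd F]
  [TopologicalSpace R] [ContinuousSMul R E] [ContinuousSMul R F]

theorem graph_closure_subset_closure_graph (f : E →ₗ.[R] F) :
    (f.closure.graph : Set (E × F)) ⊆ _root_.closure (f.graph : Set (E × F)) := by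
  by_cases hf : f.IsClosable
  · rw [← hf.graph_closure_eq_closure_graph, Submodule.topologicalClosure_coe]
  · rw [closure_def' hf]
    exact subset_closure

end Closure

variable {𝕜 E F : Type*} [RCLike 𝕜] [NormedAddCommGroup E] [InnerProductSpace 𝕜 E]
  [NormedAddCommGroup F] [InnerProductSpace 𝕜 F]

theorem IsFormalAdjoint.closure {T : E →ₗ.[𝕜] F} {S : F →ₗ.[𝕜] E} (h : T.IsFormalAdjoint S) :
    T.closure.IsFormalAdjoint S := by
  intro x y
  have hclosed : _root_.IsClosed {p : E × F | inner 𝕜 p.2 (y : F) = inner 𝕜 p.1 (S y)} :=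
    isClosed_eq (continuous_snd.inner continuous_const) (continuous_fst.inner continuous_const)
  have hgraph : (T.graph : Set (E × F)) ⊆ {p | inner 𝕜 p.2 (y : F) = inner 𝕜 p.1 (S y)} := by
    intro p hp
    obtain ⟨u, rfl⟩ := (T.mem_graph_iff' (x := p)).mp hp
    exact h u y
  exact closure_minimal hgraph hclosed
    (T.graph_closure_subset_closure_graph (T.closure.mem_graph x))

theorem IsFormalAdjoint.of_le_left {T T' : E →ₗ.[𝕜] F} {S : F →ₗ.[𝕜] E}
    (h : T'.IsFormalAdjoint S) (hTT' : T ≤ T') : T.IsFormalAdjoint S := fun x y => by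
  rw [hTT'.2 (y := ⟨x, hTT'.1 x.2⟩) rfl]
  exact h _ y

variable [CompleteSpace E]

theorem adjoint_le_adjoint_closure {T : E →ₗ.[𝕜] F} (hT : Dense (T.domain : Set E)) :
    T† ≤ T.closure† :=
  (adjoint_isFormalAdjoint hT).symm.closure.le_adjoint
    (hT.mono T.le_closure.1)

theorem le_closure_of_isFormalAdjoint_self {P R : E →ₗ.[𝕜] E} (hP : P.IsFormalAdjoint P)
    (hRP : R ≤ P) (hR : Dense (R.domain : Set E)) (hsa : IsSelfAdjoint R.closure) :
    P ≤ R.closure :=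
  calc P ≤ R† := (hP.of_le_left hRP).le_adjoint hR
    _ ≤ R.closure† := adjoint_le_adjoint_closure hR
    _ = R.closure := hsa

end LinearPMap

theorem stmt_0_general {H : Type*} [NormedAddCommGroup H] [InnerProductSpace ℂ H] [CompleteSpace H]
    (P₁ P₂ : H →ₗ.[ℂ] H)
    (hsymm₁ : ∀ x y : P₁.domain, ⟪P₁ x, (y : H)⟫ = ⟪(x : H), P₁ y⟫)
    (hsymm₂ : ∀ x y : P₂.domain, ⟪P₂ x, (y : H)⟫ = ⟪(x : H), P₂ y⟫)
    (hdom : P₁.domain = P₂.domain)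
    (L : Submodule ℂ H) (hL : L ≤ P₁.domain) (hLdense : Dense (L : Set H))
    (hagree : ∀ (x : P₁.domain) (y : P₂.domain), (x : H) = (y : H) → (x : H) ∈ L → P₁ x = P₂ y)
    (hesa₁ : IsSelfAdjoint (P₁.domRestrict L).closure) :
    P₁ = P₂ := by
  have hR : P₁.domRestrict L = P₂.domRestrict L := by
    refine LinearPMap.ext (by simp only [LinearPMap.domRestrict_domain, hdom]) ?_
    intro x hx₁ hx₂
    exact (LinearPMap.domRestrict_apply (y := ⟨x, hx₁.2⟩) rfl).trans
      ((hagree _ _ rfl hx₁.1).trans (LinearPMap.domRestrict_apply (y := ⟨x, hx₂.2⟩) rfl).symm)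
  have hRdense : Dense ((P₁.domRestrict L).domain : Set H) := by
    rwa [LinearPMap.domRestrict_domain, inf_eq_left.mpr hL]
  have h₁ := LinearPMap.le_closure_of_isFormalAdjoint_self hsymm₁
    LinearPMap.domRestrict_le hRdense hesa₁
  have h₂ := LinearPMap.le_closure_of_isFormalAdjoint_self hsymm₂
    (hR ▸ LinearPMap.domRestrict_le) hRdense hesa₁
  refine LinearPMap.ext hdom fun x hx₁ hx₂ => ?_
  exact (h₁.2 (y := ⟨x, h₁.1 hx₁⟩) rfl).trans (h₂.2 (y := ⟨x, h₁.1 hx₁⟩) rfl).symm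

/-- If two symmetric operators with equal domains agree on a dense subspace `L` of the
Hilbert space on which their restrictions are essentially self-adjoint, then they are equal. -/
theorem stmt_0 {H : Type*} [NormedAddCommGroup H] [InnerProductSpace ℂ H] [CompleteSpace H]
    (P₁ P₂ : H →ₗ.[ℂ] H)
    (hd₁ : Dense (P₁.domain : Set H)) (hd₂ : Dense (P₂.domain : Set H))
    (hsymm₁ : ∀ x y : P₁.domain, ⟪P₁ x, (y : H)⟫ = ⟪(x : H), P₁ y⟫)
    (hsymm₂ : ∀ x y : P₂.domain, ⟪P₂ x, (y : H)⟫ = ⟪(x : H), P₂ y⟫)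
    (hdom : P₁.domain = P₂.domain)
    (L : Submodule ℂ H) (hL : L ≤ P₁.domain) (hLdense : Dense (L : Set H))
    (hagree : ∀ (x : P₁.domain) (y : P₂.domain), (x : H) = (y : H) → (x : H) ∈ L → P₁ x = P₂ y)
    (hesa₁ : IsSelfAdjoint (P₁.domRestrict L).closure)
    (hesa₂ : IsSelfAdjoint (P₂.domRestrict L).closure) :
    P₁ = P₂ :=
  stmt_0_general P₁ P₂ hsymm₁ hsymm₂ hdom L hL hLdense hagree hesa₁
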